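/- arXiv:2503.13312 — 2 statements merged into one kernel-verified Lean document; each statement's English description precedes it below -/
import Mathlib

section
/- Let A be a topological ring, Γ and Δ linearly ordered commutative groups with zero, v' : A → Γ a valuation, and φ : Γ → Δ a quotient by a convex subgroup. Set v = φ ∘ v' (a valuation with values in Δ). If v is continuous, then v' is continuous. (Vertical specializations of continuous valuations are continuous; Lemma 3.2, vertical part.) -/
/-- An element of a topological ring is topologically nilpotent if its powers tend to zero. -/
def IsTopologicallyNilpotent' {A : Type*} [Ring A] [TopologicalSpace A] (a : A) : Prop :=
  Filter.Tendsto (fun n : ℕ => a ^ n) Filter.atTop (nhds 0)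

/-- The value group of a `Γ`-valued function on `A`: the subgroup of `Γˣ` generated by the
nonzero values. -/
def valueGroupOf {A : Type*} {Γ : Type*} [LinearOrderedCommGroupWithZero Γ]
    (f : A → Γ) : Subgroup Γˣ :=
  Subgroup.closure {γ : Γˣ | ∃ a : A, f a = (γ : Γ)}

/-- Huber's characterization of continuity for valuations on Huber rings
([Hu93], Theorem 3.1). -/
def IsHuberContinuous {A : Type*} [Ring A] [TopologicalSpace A] {Γ : Type*}
    [LinearOrderedCommGroupWithZero Γ] (f : A → Γ) : Prop :=
  ∀ a : A, IsTopologicallyNilpotent' a → ∀ γ ∈ valueGroupOf f, ∃ n : ℕ, f a ^ n < (γ : Γ)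

/-- A monoid-with-zero homomorphism `φ : Γ → Δ` is a quotient by a convex subgroup if
`φ x = 0 ↔ x = 0` and `φ x < φ y ↔ (x·h < y for all h with φ h = 1)`. -/
def IsQuotientByConvexSubgroup {Γ Δ : Type*} [LinearOrderedCommGroupWithZero Γ]
    [LinearOrderedCommGroupWithZero Δ] (φ : Γ →*₀ Δ) : Prop :=
  (∀ x : Γ, φ x = 0 ↔ x = 0) ∧
  (∀ x y : Γ, φ x < φ y ↔ ∀ h : Γ, φ h = 1 → x * h < y)

theorem valueGroupOf_map_le_valueGroupOf_comp {A Γ Δ : Type*} [LinearOrderedCommGroupWithZero Γ]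
    [LinearOrderedCommGroupWithZero Δ] (f : A → Γ) (φ : Γ →*₀ Δ) :
    (valueGroupOf f).map (Units.map φ.toMonoidHom) ≤ valueGroupOf (fun a => φ (f a)) := by
  rw [valueGroupOf, MonoidHom.map_closure]
  apply Subgroup.closure_mono
  rintro _ ⟨u, ⟨b, hb⟩, rfl⟩
  exact ⟨b, by simp [hb]⟩

theorem IsQuotientByConvexSubgroup.lt_of_map_lt {Γ Δ : Type*} [LinearOrderedCommGroupWithZero Γ]
    [LinearOrderedCommGroupWithZero Δ] {φ : Γ →*₀ Δ} (hφ : IsQuotientByConvexSubgroup φ)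
    {x y : Γ} (h : φ x < φ y) : x < y := by
  simpa using (hφ.2 x y).mp h 1 (map_one φ)

theorem IsHuberContinuous.of_comp {A : Type*} [Ring A] [TopologicalSpace A]
    {Γ Δ : Type*} [LinearOrderedCommGroupWithZero Γ] [LinearOrderedCommGroupWithZero Δ]
    {f : A → Γ} {φ : Γ →*₀ Δ} (hφ : ∀ x y : Γ, φ x < φ y → x < y)
    (hf : IsHuberContinuous (fun a => φ (f a))) : IsHuberContinuous f := by
  intro a ha γ hγ
  obtain ⟨n, hn⟩ := hf a ha _
    (valueGroupOf_map_le_valueGroupOf_comp f φ (Subgroup.mem_map_of_mem _ hγ))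
  exact ⟨n, hφ _ _ (by simpa [map_pow] using hn)⟩

/-- Vertical specializations of continuous valuations are continuous. -/
theorem vertical_specialization_continuous
    {A : Type*} [Ring A] [TopologicalSpace A]
    {Γ Δ : Type*} [LinearOrderedCommGroupWithZero Γ] [LinearOrderedCommGroupWithZero Δ]
    (v' : Valuation A Γ) (φ : Γ →*₀ Δ) (hφ : IsQuotientByConvexSubgroup φ)
    (hv : IsHuberContinuous (fun a : A => φ (v' a))) :
    IsHuberContinuous (⇑v') :=
  hv.of_comp fun _ _ => hφ.lt_of_map_lt
end

section
/- Let S be a scheme, f : X ⟶ S a proper morphism, and f' : X' ⟶ S a separated morphism. Let ι : X ⟶ X' be an open immersion with dense image such that ι ≫ f' = f. Then ι is an isomorphism. (Scheme-level form of Lemma 6.6, proved by the paper's argument: the section of the first projection X ×_S X' → X given by ι is a closed immersion since f' is separated, its image maps onto ι(X) under the closed map X ×_S X' → X', so ι(X) is closed as well as open and dense in X'.) -/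
open CategoryTheory AlgebraicGeometry

universe u

lemma IsClosedMap.surjective_of_denseRange {α β : Type*} [TopologicalSpace α]
    [TopologicalSpace β] {f : α → β} (hf : IsClosedMap f) (hdense : DenseRange f) :
    Function.Surjective f := by
  rw [← Set.range_eq_univ, ← hdense.closure_eq, hf.isClosed_range.closure_eq]

lemma AlgebraicGeometry.IsOpenImmersion.isIso_of_isClosedMap_of_dense {X Y : Scheme.{u}}
    (f : X ⟶ Y) [IsOpenImmersion f] (hclosed : IsClosedMap f.base)
    (hdense : Dense (Set.range f.base)) : IsIso f := by
  have : Surjective f := ⟨hclosed.surjective_of_denseRange hdense⟩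
  exact (isIso_iff_isOpenImmersion_and_surjective f).mpr ⟨‹_›, ‹_›⟩

/-- Lemma 6.6 (scheme-level form): a dense open immersion `ι : X ⟶ X'` over `S`, with `X`
proper over `S` and `X'` separated over `S`, is an isomorphism. -/
theorem isIso_of_denseOpenImmersion_of_proper
    {X X' S : Scheme.{u}} (f : X ⟶ S) (f' : X' ⟶ S) (ι : X ⟶ X')
    [IsOpenImmersion ι] (hdense : Dense (Set.range ι.base))
    [IsProper f] [IsSeparated f'] (hcomp : ι ≫ f' = f) :
    IsIso ι := by
  have : UniversallyClosed (ι ≫ f') := hcomp ▸ inferInstance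
  -- `ι` is its graph, a closed immersion as `f'` is separated, followed by a base change of `f`.
  have : UniversallyClosed ι := .of_comp_of_isSeparated ι f'
  exact IsOpenImmersion.isIso_of_isClosedMap_of_dense ι ι.isClosedMap hdense
end
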